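/- Let m ≥ 1, let r ∈ ℂ be a primitive m-th root of unity, let j be an integer with 1 ≤ j ≤ m−1, and let a ∈ ℂ. Then ∑_{s=0}^{m−1} (r^s)^j · ∏_{i=1}^{j−1} (a − r^{−s}·r^i) · ∏_{i=1}^{m−j−1} (a − r^s·r^i) = 0 (each product being 1 when empty). -/

import Mathlib

/-!
Write `z = r ^ s`. Multiplying the first product by `z ^ (j - 1)` clears the negative powers, so
the `s`-th summand is `Q(z)` for the polynomial
`Q = X * ∏_{i=1}^{j-1} (a X - r^i) * ∏_{i=1}^{m-j-1} (a - r^i X)`, which has no constant term and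
degree at most `m - 1`. Summing a monomial `z ^ k` with `0 < k < m` over all `m`-th roots of
unity gives `0`, hence so does summing `Q`.
-/

open Finset Polynomial

namespace IsPrimitiveRoot

variable {R : Type*} [CommRing R] [IsDomain R] {ζ : R} {m : ℕ}

theorem sum_range_pow_pow_eq_zero (hζ : IsPrimitiveRoot ζ m) {k : ℕ} (hk0 : 0 < k)
    (hkm : k < m) : ∑ s ∈ range m, (ζ ^ s) ^ k = 0 := by
  have hne : ζ ^ k ≠ 1 := hζ.pow_ne_one_of_pos_of_lt hk0.ne' hkm
  simp_rw [← pow_mul, mul_comm _ k, pow_mul]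
  refine eq_zero_of_ne_zero_of_mul_left_eq_zero (sub_ne_zero_of_ne hne.symm) ?_
  rw [mul_neg_geom_sum, ← pow_mul, mul_comm, pow_mul, hζ.pow_eq_one, one_pow, sub_self]

theorem sum_range_eval_pow_eq_zero (hζ : IsPrimitiveRoot ζ m) {Q : R[X]} (hQ0 : Q.coeff 0 = 0)
    (hQm : Q.natDegree < m) : ∑ s ∈ range m, Q.eval (ζ ^ s) = 0 := by
  simp_rw [eval_eq_sum_range' hQm]
  rw [sum_comm]
  refine sum_eq_zero fun k hk => ?_
  rcases Nat.eq_zero_or_pos k with rfl | hk0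
  · simp [hQ0]
  · rw [← mul_sum, hζ.sum_range_pow_pow_eq_zero hk0 (mem_range.mp hk), mul_zero]

end IsPrimitiveRoot

theorem Polynomial.natDegree_prod_le_card {R ι : Type*} [CommSemiring R] {s : Finset ι}
    {f : ι → R[X]} (hf : ∀ i ∈ s, (f i).natDegree ≤ 1) : (∏ i ∈ s, f i).natDegree ≤ #s :=
  (natDegree_prod_le s f).trans <| by simpa using sum_le_sum hf

theorem pow_mul_prod_sub_inv_mul {K ι : Type*} [Field K] {z : K} (hz : z ≠ 0) {j : ℕ}
    (hj : 1 ≤ j) (a : K) (b : ι → K) {s : Finset ι} (hs : #s = j - 1) :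
    z ^ j * ∏ i ∈ s, (a - z⁻¹ * b i) = z * ∏ i ∈ s, (a * z - b i) := by
  obtain ⟨n, rfl⟩ := Nat.exists_eq_add_of_le' hj
  rw [Nat.add_sub_cancel] at hs
  rw [pow_succ', mul_assoc, ← hs, ← prod_const, ← prod_mul_distrib]
  congr 1
  refine prod_congr rfl fun i _ => ?_
  field_simp

theorem stmt9_general (m : ℕ) (r : ℂ) (hr : IsPrimitiveRoot r m)
    (j : ℕ) (hj1 : 1 ≤ j) (hj2 : j ≤ m - 1) (a : ℂ) :
    ∑ s ∈ Finset.range m,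
        (r ^ s) ^ j * (∏ i ∈ Finset.Icc 1 (j - 1), (a - r ^ (-(s : ℤ)) * r ^ i)) *
          ∏ i ∈ Finset.Icc 1 (m - j - 1), (a - r ^ s * r ^ i) = 0 := by
  set A : ℂ[X] := ∏ i ∈ Icc 1 (j - 1), (C a * X - C (r ^ i))
  set B : ℂ[X] := ∏ i ∈ Icc 1 (m - j - 1), (C a - C (r ^ i) * X)
  have hQ0 : (X * A * B).coeff 0 = 0 := by simp [mul_assoc]
  have hQm : (X * A * B).natDegree < m := by
    have hA : A.natDegree ≤ j - 1 :=
      (natDegree_prod_le_card fun _ _ => by compute_degree).trans (by simp)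
    have hB : B.natDegree ≤ m - j - 1 :=
      (natDegree_prod_le_card fun _ _ => by compute_degree).trans (by simp)
    have hQ : (X * A * B).natDegree ≤ 1 + A.natDegree + B.natDegree :=
      natDegree_mul_le.trans (by simpa using natDegree_mul_le (p := (X : ℂ[X])) (q := A))
    omega
  have hr0 : r ≠ 0 := hr.ne_zero (by omega)
  rw [← hr.sum_range_eval_pow_eq_zero hQ0 hQm]
  refine sum_congr rfl fun s _ => ?_
  rw [zpow_neg, zpow_natCast, pow_mul_prod_sub_inv_mul (pow_ne_zero s hr0) hj1 _ _
    (by simp)]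
  simp only [A, B, eval_mul, eval_prod, eval_sub, eval_C, eval_X]
  simp_rw [mul_comm (r ^ s) (r ^ _)]

/-- The vanishing-sum identity used in the proof of unitarity:
for a primitive `m`-th root of unity `r` and `1 ≤ j ≤ m−1`,
`∑_{s=0}^{m−1} (r^s)^j · ∏_{i=1}^{j−1}(a − r^{−s}r^i) · ∏_{i=1}^{m−j−1}(a − r^s r^i) = 0`. -/
theorem stmt9 (m : ℕ) (hm : 1 ≤ m) (r : ℂ) (hr : IsPrimitiveRoot r m)
    (j : ℕ) (hj1 : 1 ≤ j) (hj2 : j ≤ m - 1) (a : ℂ) :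
    ∑ s ∈ Finset.range m,
        (r ^ s) ^ j * (∏ i ∈ Finset.Icc 1 (j - 1), (a - r ^ (-(s : ℤ)) * r ^ i)) *
          ∏ i ∈ Finset.Icc 1 (m - j - 1), (a - r ^ s * r ^ i) = 0 :=
  stmt9_general m r hr j hj1 hj2 a
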